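/- arXiv:1002.0792 — 3 statements merged into one kernel-verified Lean document; each statement's English description precedes it below -/
import Mathlib

section
/- Let n ≥ 1 and let {S_t}_{t>0} and {T_t}_{t>0} be two families of bounded linear operators on L²(ℝⁿ;ℂ), each satisfying L² off-diagonal (Gaffney) estimates, with constants (C₁, c₁) and (C₂, c₂) respectively. Then there exist constants C, c > 0, depending only on C₁, c₁, C₂, c₂, such that for all closed sets E, F ⊆ ℝⁿ, all s, t > 0, and every f ∈ L²(ℝⁿ;ℂ) vanishing a.e. outside E, one has ‖1_F · S_s(T_t f)‖_{L²} ≤ C exp(−dist(E,F)² / (c · max{s,t})) ‖f‖_{L²}. -/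
/-!
Let `d = dist(E, F)` and split `T_t f` along the closed `d/2`-neighbourhood `G` of `E`. The part
on `G` is at distance `≥ d/2` from `F`, so the off-diagonal decay of `S_s` applies to it; the part
off `G` is at distance `≥ d/2` from the support `E` of `f`, so there the decay comes from `T_t`,
and `S_s` is only used as a bounded operator. Both decay factors `exp(-(d/2)²/(cᵢ r))` are
dominated by `exp(-d²/(4 max(c₁, c₂) max(s, t)))`.
-/

open MeasureTheory Metric

noncomputable section

abbrev Euc (n : ℕ) := EuclideanSpace ℝ (Fin n)

abbrev L2 (n : ℕ) := MeasureTheory.Lp ℂ 2 (volume : Measure (Euc n))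

/-- Distance between two sets: `inf {dist x y : x ∈ E, y ∈ F}` (junk value `0` if empty). -/
noncomputable def setDist {X : Type*} [PseudoMetricSpace X] (E F : Set X) : ℝ :=
  sInf (Set.image2 dist E F)

/-- The family `S : ℝ → L²(ℝⁿ;ℂ) →L L²(ℝⁿ;ℂ)` satisfies L² off-diagonal (Gaffney)
estimates with constants `C, c > 0`. -/
def Gaffney (n : ℕ) (S : ℝ → L2 n →L[ℂ] L2 n) (C c : ℝ) : Prop :=
  ∀ E F : Set (Euc n), IsClosed E → IsClosed F → ∀ t : ℝ, 0 < t →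
    ∀ f : L2 n, (∀ᵐ x ∂(volume : Measure (Euc n)), x ∉ E → f x = 0) →
      eLpNorm (F.indicator (⇑(S t f))) 2 volume ≤
        ENNReal.ofReal (C * Real.exp (-(setDist E F) ^ 2 / (c * t))) *
          eLpNorm (⇑f) 2 volume

section SetDist

variable {X : Type*} [PseudoMetricSpace X] {E F : Set X}

lemma setDist_nonneg (E F : Set X) : 0 ≤ setDist E F :=
  Real.sInf_nonneg (by rintro _ ⟨x, -, y, -, rfl⟩; exact dist_nonneg)

lemma setDist_le_dist {x y : X} (hx : x ∈ E) (hy : y ∈ F) : setDist E F ≤ dist x y :=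
  csInf_le ⟨0, by rintro _ ⟨a, -, b, -, rfl⟩; exact dist_nonneg⟩ (Set.mem_image2_of_mem hx hy)

lemma le_setDist {r : ℝ} (hE : E.Nonempty) (hF : F.Nonempty)
    (h : ∀ x ∈ E, ∀ y ∈ F, r ≤ dist x y) : r ≤ setDist E F :=
  le_csInf (hE.image2 hF) (by rintro _ ⟨x, hx, y, hy, rfl⟩; exact h x hx y hy)

lemma setDist_univ_self [Nonempty X] : setDist (Set.univ : Set X) Set.univ = 0 :=
  let x : X := Classical.arbitrary X
  le_antisymm ((setDist_le_dist (Set.mem_univ x) (Set.mem_univ x)).trans_eq (dist_self x))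
    (setDist_nonneg _ _)

lemma setDist_le_infDist {y : X} (hy : y ∈ F) : setDist E F ≤ infDist y E := by
  rcases E.eq_empty_or_nonempty with rfl | hE
  · simp [setDist]
  · exact (le_infDist hE).2 fun x hx => (setDist_le_dist hx hy).trans_eq (dist_comm x y)

lemma setDist_le_add_dist_of_infDist_le {r : ℝ} {x y : X} (hx : infDist x E ≤ r) (hy : y ∈ F) :
    setDist E F ≤ r + dist x y := by
  have h := infDist_le_infDist_add_dist (x := y) (y := x) (s := E)
  linarith [setDist_le_infDist (E := E) hy, dist_comm x y]

end SetDist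

lemma Real.exp_neg_half_sq_div_le {d c r M m : ℝ} (hc : 0 < c) (hr : 0 < r) (hcM : c ≤ M)
    (hrm : r ≤ m) : Real.exp (-(d / 2) ^ 2 / (c * r)) ≤ Real.exp (-d ^ 2 / (4 * M * m)) := by
  rw [Real.exp_le_exp, show -d ^ 2 / (4 * M * m) = -(d / 2) ^ 2 / (M * m) by ring, neg_div,
    neg_div, neg_le_neg_iff]
  exact div_le_div_of_nonneg_left (sq_nonneg _) (by positivity)
    (mul_le_mul hcM hrm hr.le (hc.le.trans hcM))

namespace MeasureTheory.Lp

variable {α E : Type*} [MeasurableSpace α] {μ : Measure α} [NormedAddCommGroup E]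
  {p : ENNReal}

lemma exists_eq_add_indicator_compl (g : Lp E p μ) {s : Set α} (hs : MeasurableSet s) :
    ∃ u v : Lp E p μ, g = u + v ∧ ⇑u =ᵐ[μ] s.indicator g ∧ ⇑v =ᵐ[μ] sᶜ.indicator g := by
  have hu := (Lp.memLp g).indicator hs
  have hv := (Lp.memLp g).indicator hs.compl
  refine ⟨hu.toLp (s.indicator g), hv.toLp (sᶜ.indicator g), ?_, hu.coeFn_toLp, hv.coeFn_toLp⟩
  refine Lp.ext ?_
  filter_upwards [Lp.coeFn_add (hu.toLp _) (hv.toLp _), hu.coeFn_toLp, hv.coeFn_toLp]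
    with x hadd hux hvx
  rw [hadd, Pi.add_apply, hux, hvx, Set.indicator_self_add_compl_apply]

lemma eLpNorm_indicator_add_le (hp : 1 ≤ p) (u v : Lp E p μ) {s : Set α}
    (hs : MeasurableSet s) :
    eLpNorm (s.indicator ⇑(u + v)) p μ ≤
      eLpNorm (s.indicator ⇑u) p μ + eLpNorm (s.indicator ⇑v) p μ := by
  have h : s.indicator ⇑(u + v) =ᵐ[μ] s.indicator ⇑u + s.indicator ⇑v := by
    filter_upwards [Lp.coeFn_add u v] with x hx
    by_cases hxs : x ∈ s
    · simpa only [Pi.add_apply, Set.indicator_of_mem hxs] using hx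
    · simp only [Pi.add_apply, Set.indicator_of_notMem hxs, add_zero]
  rw [eLpNorm_congr_ae h]
  exact eLpNorm_add_le ((Lp.aestronglyMeasurable u).indicator hs)
    ((Lp.aestronglyMeasurable v).indicator hs) hp

end MeasureTheory.Lp

namespace Gaffney

variable {n : ℕ} {S : ℝ → L2 n →L[ℂ] L2 n} {C c : ℝ}

lemma eLpNorm_le (hS : Gaffney n S C c) {t : ℝ} (ht : 0 < t) (f : L2 n) :
    eLpNorm (⇑(S t f)) 2 volume ≤ ENNReal.ofReal C * eLpNorm (⇑f) 2 volume := by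
  simpa [setDist_univ_self] using
    hS Set.univ Set.univ isClosed_univ isClosed_univ t ht f (by simp)

lemma eLpNorm_indicator_le_of_le_dist (hS : Gaffney n S C c) (hC : 0 ≤ C) (hc : 0 ≤ c)
    {E F : Set (Euc n)} (hE : IsClosed E) (hF : IsClosed F) {r : ℝ} (hr : 0 ≤ r)
    (hEF : ∀ x ∈ E, ∀ y ∈ F, r ≤ dist x y) {t : ℝ} (ht : 0 < t) {f : L2 n}
    (hf : ∀ᵐ x ∂(volume : Measure (Euc n)), x ∉ E → f x = 0) :
    eLpNorm (F.indicator ⇑(S t f)) 2 volume ≤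
      ENNReal.ofReal (C * Real.exp (-r ^ 2 / (c * t))) * eLpNorm (⇑f) 2 volume := by
  -- `setDist` takes the junk value `0` at empty sets, so these cases are settled directly.
  rcases E.eq_empty_or_nonempty with rfl | hEne
  · have hf0 : eLpNorm (⇑f) 2 volume = 0 := by
      rw [eLpNorm_congr_ae (g := 0) (hf.mono fun x hx => hx (Set.notMem_empty x)), eLpNorm_zero]
    calc eLpNorm (F.indicator ⇑(S t f)) 2 volume
        ≤ eLpNorm (⇑(S t f)) 2 volume := eLpNorm_indicator_le _
      _ ≤ ENNReal.ofReal C * eLpNorm (⇑f) 2 volume := hS.eLpNorm_le ht f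
      _ = 0 := by rw [hf0, mul_zero]
      _ ≤ _ := zero_le
  rcases F.eq_empty_or_nonempty with rfl | hFne
  · simp
  refine (hS E F hE hF t ht f hf).trans (mul_le_mul_left (ENNReal.ofReal_le_ofReal ?_) _)
  have hrd : r ≤ setDist E F := le_setDist hEne hFne hEF
  gcongr

variable {C₁ c₁ C₂ c₂ : ℝ} {T : ℝ → L2 n →L[ℂ] L2 n} {E F : Set (Euc n)} {s t : ℝ} {f : L2 n}

lemma eLpNorm_indicator_near_le (hS : Gaffney n S C₁ c₁) (hT : Gaffney n T C₂ c₂)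
    (hC₁ : 0 ≤ C₁) (hc₁ : 0 ≤ c₁) (hF : IsClosed F) (hs : 0 < s) (ht : 0 < t) {u : L2 n}
    (hu : ⇑u =ᵐ[volume] {x | infDist x E ≤ setDist E F / 2}.indicator ⇑(T t f)) :
    eLpNorm (F.indicator ⇑(S s u)) 2 volume ≤
      ENNReal.ofReal (C₁ * Real.exp (-(setDist E F / 2) ^ 2 / (c₁ * s))) *
        (ENNReal.ofReal C₂ * eLpNorm (⇑f) 2 volume) := by
  set G := {x | infDist x E ≤ setDist E F / 2}
  have hG : IsClosed G := isClosed_le (continuous_infDist_pt E) continuous_const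
  have hGF : ∀ x ∈ G, ∀ y ∈ F, setDist E F / 2 ≤ dist x y := fun x hx y hy => by
    linarith [setDist_le_add_dist_of_infDist_le hx hy]
  have hu_supp : ∀ᵐ x ∂(volume : Measure (Euc n)), x ∉ G → u x = 0 := by
    filter_upwards [hu] with x hx hxG
    rw [hx, Set.indicator_of_notMem hxG]
  have hu_le : eLpNorm (⇑u) 2 volume ≤ ENNReal.ofReal C₂ * eLpNorm (⇑f) 2 volume := by
    rw [eLpNorm_congr_ae hu]
    exact (eLpNorm_indicator_le _).trans (hT.eLpNorm_le ht f)
  refine (hS.eLpNorm_indicator_le_of_le_dist hC₁ hc₁ hG hF ?_ hGF hs hu_supp).trans ?_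
  · linarith [setDist_nonneg E F]
  · gcongr

lemma eLpNorm_indicator_far_le (hS : Gaffney n S C₁ c₁) (hT : Gaffney n T C₂ c₂)
    (hC₂ : 0 ≤ C₂) (hc₂ : 0 ≤ c₂) (hE : IsClosed E) (hs : 0 < s) (ht : 0 < t)
    (hf : ∀ᵐ x ∂(volume : Measure (Euc n)), x ∉ E → f x = 0) {v : L2 n}
    (hv : ⇑v =ᵐ[volume] {x | infDist x E ≤ setDist E F / 2}ᶜ.indicator ⇑(T t f)) :
    eLpNorm (F.indicator ⇑(S s v)) 2 volume ≤
      ENNReal.ofReal C₁ * (ENNReal.ofReal (C₂ * Real.exp (-(setDist E F / 2) ^ 2 / (c₂ * t))) *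
        eLpNorm (⇑f) 2 volume) := by
  set H := {x | setDist E F / 2 ≤ infDist x E}
  have hH : IsClosed H := isClosed_le continuous_const (continuous_infDist_pt E)
  have hEH : ∀ x ∈ E, ∀ y ∈ H, setDist E F / 2 ≤ dist x y := fun x hx y hy =>
    (show setDist E F / 2 ≤ infDist y E from hy).trans
      ((infDist_le_dist_of_mem hx).trans_eq (dist_comm y x))
  have hv_le : eLpNorm (⇑v) 2 volume ≤ eLpNorm (H.indicator ⇑(T t f)) 2 volume := by
    rw [eLpNorm_congr_ae hv]
    have hGH : {x | infDist x E ≤ setDist E F / 2}ᶜ ⊆ H := fun y hy =>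
      (not_le.1 (show ¬infDist y E ≤ setDist E F / 2 from hy)).le
    exact eLpNorm_mono fun x => norm_indicator_le_of_subset hGH _ x
  refine (eLpNorm_indicator_le _).trans ((hS.eLpNorm_le hs v).trans ?_)
  gcongr
  refine hv_le.trans (hT.eLpNorm_indicator_le_of_le_dist hC₂ hc₂ hE hH ?_ hEH ht hf)
  linarith [setDist_nonneg E F]

lemma eLpNorm_indicator_comp_le (hS : Gaffney n S C₁ c₁) (hT : Gaffney n T C₂ c₂)
    (hC₁ : 0 ≤ C₁) (hc₁ : 0 ≤ c₁) (hC₂ : 0 ≤ C₂) (hc₂ : 0 ≤ c₂) (hE : IsClosed E)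
    (hF : IsClosed F) (hs : 0 < s) (ht : 0 < t)
    (hf : ∀ᵐ x ∂(volume : Measure (Euc n)), x ∉ E → f x = 0) :
    eLpNorm (F.indicator ⇑(S s (T t f))) 2 volume ≤
      ENNReal.ofReal (C₁ * C₂ * (Real.exp (-(setDist E F / 2) ^ 2 / (c₁ * s)) +
        Real.exp (-(setDist E F / 2) ^ 2 / (c₂ * t)))) * eLpNorm (⇑f) 2 volume := by
  have hG : IsClosed {x | infDist x E ≤ setDist E F / 2} :=
    isClosed_le (continuous_infDist_pt E) continuous_const
  obtain ⟨u, v, huv, hu, hv⟩ := Lp.exists_eq_add_indicator_compl (T t f) hG.measurableSet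
  calc eLpNorm (F.indicator ⇑(S s (T t f))) 2 volume
      ≤ eLpNorm (F.indicator ⇑(S s u)) 2 volume + eLpNorm (F.indicator ⇑(S s v)) 2 volume := by
        rw [huv, map_add]
        exact Lp.eLpNorm_indicator_add_le one_le_two _ _ hF.measurableSet
    _ ≤ _ := add_le_add (hS.eLpNorm_indicator_near_le hT hC₁ hc₁ hF hs ht hu)
        (hS.eLpNorm_indicator_far_le hT hC₂ hc₂ hE hs ht hf hv)
    _ = _ := by
        have he₁ := mul_nonneg hC₁ (Real.exp_pos (-(setDist E F / 2) ^ 2 / (c₁ * s))).le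
        have he₂ := mul_nonneg hC₂ (Real.exp_pos (-(setDist E F / 2) ^ 2 / (c₂ * t))).le
        rw [← mul_assoc, ← mul_assoc, ← ENNReal.ofReal_mul he₁, ← ENNReal.ofReal_mul hC₁, ← add_mul,
          ← ENNReal.ofReal_add (mul_nonneg he₁ hC₂) (mul_nonneg hC₁ he₂)]
        congr 2
        ring

end Gaffney

/-- Composition of two Gaffney families again satisfies a Gaffney-type estimate, at the
scale `max s t`. -/
theorem statement0 (C₁ c₁ C₂ c₂ : ℝ) (hC₁ : 0 < C₁) (hc₁ : 0 < c₁)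
    (hC₂ : 0 < C₂) (hc₂ : 0 < c₂) :
    ∃ C > 0, ∃ c > 0, ∀ (n : ℕ), 1 ≤ n →
      ∀ (S T : ℝ → L2 n →L[ℂ] L2 n), Gaffney n S C₁ c₁ → Gaffney n T C₂ c₂ →
      ∀ E F : Set (Euc n), IsClosed E → IsClosed F →
      ∀ s t : ℝ, 0 < s → 0 < t →
      ∀ f : L2 n, (∀ᵐ x ∂(volume : Measure (Euc n)), x ∉ E → f x = 0) →
        eLpNorm (F.indicator (⇑(S s (T t f)))) 2 volume ≤
          ENNReal.ofReal (C * Real.exp (-(setDist E F) ^ 2 / (c * max s t))) *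
            eLpNorm (⇑f) 2 volume := by
  refine ⟨2 * (C₁ * C₂), by positivity, 4 * max c₁ c₂, by positivity, ?_⟩
  intro n _ S T hS hT E F hE hF s t hs ht f hf
  refine (hS.eLpNorm_indicator_comp_le hT hC₁.le hc₁.le hC₂.le hc₂.le hE hF hs ht hf).trans
    (mul_le_mul_left (ENNReal.ofReal_le_ofReal ?_) _)
  rw [mul_comm 2 (C₁ * C₂), mul_assoc (C₁ * C₂) 2, two_mul]
  refine mul_le_mul_of_nonneg_left (add_le_add ?_ ?_) (mul_pos hC₁ hC₂).le
  · exact Real.exp_neg_half_sq_div_le hc₁ hs (le_max_left _ _) (le_max_left _ _)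
  · exact Real.exp_neg_half_sq_div_le hc₂ ht (le_max_right _ _) (le_max_right _ _)
end
end

section
/- Let 0 < θ < ν < π/2, σ > 0, τ > 1, C₀ > 0, and B > 0. Let ψ, f : ℂ → ℂ be functions such that for every s > 0 one has |ψ(s e^{iν})| ≤ C₀ s^σ/(1 + s^{σ+τ}) and |f(s e^{iν})| ≤ B. Then there exists a constant C > 0, depending only on σ, τ, θ, ν, C₀, such that for all t > 0 and all r > 0: ∫₀^∞ |exp(ρ e^{iν} · r e^{i(π/2−θ)})| · |ψ(t ρ e^{iν})| · |f(ρ e^{iν})| dρ ≤ (C B / t) · min{1, (t/r)^{σ+1}}. In particular, the contour-integral kernel η(z) = (1/(2πi)) ∫_{γ₊} e^{ξ z} ψ(tξ) f(ξ) dξ, taken over the ray γ₊ = {ρ e^{iν} : ρ > 0} and evaluated at z = r e^{i(π/2−θ)}, satisfies |η(z)| ≤ (C B / t) min{1, (t/|z|)^{σ+1}}. -/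
/-
On the ray `ξ = ρ e^{iν}` and for `z = r e^{i(π/2-θ)}` one has `|e^{ξz}| = e^{-ρ r sin(ν-θ)}`.
Bounding this factor by `1` and rescaling `ρ ↦ tρ` in the integrable majorant
`C₀ u^σ / (1 + u^{σ+τ})` of `ψ` gives the bound `B/t`; bounding `|ψ(tξ)|` by `C₀ (tρ)^σ` instead
leaves a Gamma integral `∫ ρ^σ e^{-ρ r sin(ν-θ)} dρ`, which gives `(B/t) (t/r)^{σ+1}`.
-/

open MeasureTheory Set

noncomputable section

def psiWeight (σ τ u : ℝ) : ℝ := u ^ σ / (1 + u ^ (σ + τ))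

section psiWeight

variable {σ τ : ℝ}

lemma psiWeight_nonneg {u : ℝ} (hu : 0 ≤ u) : 0 ≤ psiWeight σ τ u := by
  unfold psiWeight
  positivity

lemma psiWeight_le_rpow {u : ℝ} (hu : 0 ≤ u) : psiWeight σ τ u ≤ u ^ σ :=
  div_le_self (Real.rpow_nonneg hu σ) (le_add_of_nonneg_right (Real.rpow_nonneg hu _))

lemma psiWeight_le_rpow_neg {u : ℝ} (hu : 0 < u) : psiWeight σ τ u ≤ u ^ (-τ) := by
  rw [psiWeight, div_le_iff₀ (by positivity), mul_add, mul_one, ← Real.rpow_add hu,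
    neg_add_cancel_comm_assoc]
  exact le_add_of_nonneg_left (Real.rpow_nonneg hu.le _)

lemma measurable_psiWeight : Measurable (psiWeight σ τ) := by
  unfold psiWeight
  fun_prop

lemma integrableOn_psiWeight (hσ : -1 < σ) (hτ : 1 < τ) :
    IntegrableOn (psiWeight σ τ) (Ioi 0) := by
  rw [← Ioc_union_Ioi_eq_Ioi zero_le_one, integrableOn_union]
  constructor
  · refine Integrable.mono' (intervalIntegral.intervalIntegrable_rpow' hσ).1
      measurable_psiWeight.aestronglyMeasurable ?_
    filter_upwards [ae_restrict_mem measurableSet_Ioc] with u hu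
    rw [Real.norm_of_nonneg (psiWeight_nonneg hu.1.le)]
    exact psiWeight_le_rpow hu.1.le
  · refine Integrable.mono' (integrableOn_Ioi_rpow_of_lt (a := -τ) (by linarith) zero_lt_one)
      measurable_psiWeight.aestronglyMeasurable ?_
    filter_upwards [ae_restrict_mem measurableSet_Ioi] with u hu
    rw [Real.norm_of_nonneg (psiWeight_nonneg (zero_le_one.trans hu.out.le))]
    exact psiWeight_le_rpow_neg (zero_lt_one.trans hu)

lemma integral_psiWeight_comp_mul {t : ℝ} (ht : 0 < t) :
    ∫ ρ in Ioi 0, psiWeight σ τ (t * ρ) = t⁻¹ * ∫ u in Ioi 0, psiWeight σ τ u := by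
  simpa using integral_comp_mul_left_Ioi (psiWeight σ τ) 0 ht

end psiWeight

section IntegralBounds

variable {F : ℝ → ℝ}

lemma setIntegral_le_of_le_psiWeight_comp_mul {σ τ t K : ℝ} (hσ : -1 < σ) (hτ : 1 < τ)
    (ht : 0 < t) (hF₀ : ∀ ρ, 0 ≤ F ρ) (hF : ∀ ρ > 0, F ρ ≤ K * psiWeight σ τ (t * ρ)) :
    ∫ ρ in Ioi 0, F ρ ≤ K * (∫ u in Ioi 0, psiWeight σ τ u) * (1 / t) := by
  have hint : IntegrableOn (fun ρ ↦ psiWeight σ τ (t * ρ)) (Ioi 0) := by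
    rw [integrableOn_Ioi_comp_mul_left_iff _ _ ht, mul_zero]
    exact integrableOn_psiWeight hσ hτ
  calc ∫ ρ in Ioi 0, F ρ ≤ ∫ ρ in Ioi 0, K * psiWeight σ τ (t * ρ) :=
        integral_mono_of_nonneg (.of_forall hF₀) (hint.const_mul K)
          ((ae_restrict_iff' measurableSet_Ioi).2 (.of_forall hF))
    _ = K * (∫ u in Ioi 0, psiWeight σ τ u) * (1 / t) := by
        rw [integral_const_mul, integral_psiWeight_comp_mul ht]
        ring

lemma setIntegral_le_of_le_rpow_mul_exp_neg_mul {σ b K : ℝ} (hσ : -1 < σ) (hb : 0 < b)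
    (hF₀ : ∀ ρ, 0 ≤ F ρ) (hF : ∀ ρ > 0, F ρ ≤ K * (ρ ^ σ * Real.exp (-(b * ρ)))) :
    ∫ ρ in Ioi 0, F ρ ≤ K * (Real.Gamma (σ + 1) * b ^ (-(σ + 1))) := by
  have hint : IntegrableOn (fun ρ ↦ ρ ^ σ * Real.exp (-(b * ρ))) (Ioi 0) := by
    simpa using integrableOn_rpow_mul_exp_neg_mul_rpow hσ one_pos hb
  have hGamma := Real.integral_rpow_mul_exp_neg_mul_Ioi (a := σ + 1) (by linarith) hb
  rw [add_sub_cancel_right, one_div, Real.inv_rpow hb.le, ← Real.rpow_neg hb.le] at hGamma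
  calc ∫ ρ in Ioi 0, F ρ ≤ ∫ ρ in Ioi 0, K * (ρ ^ σ * Real.exp (-(b * ρ))) :=
        integral_mono_of_nonneg (.of_forall hF₀) (hint.const_mul K)
          ((ae_restrict_iff' measurableSet_Ioi).2 (.of_forall hF))
    _ = K * (Real.Gamma (σ + 1) * b ^ (-(σ + 1))) := by
        rw [integral_const_mul, hGamma, mul_comm (b ^ _)]

end IntegralBounds

lemma le_max_mul_mul_min_of_le_of_le {x a b u v : ℝ} (hu : 0 ≤ u) (hv : 0 ≤ v)
    (ha : x ≤ a * u) (hb : x ≤ b * u * v) : x ≤ max a b * u * min 1 v := by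
  rcases le_total v 1 with hv1 | hv1
  · rw [min_eq_right hv1]
    exact hb.trans (by gcongr; exact le_max_right a b)
  · rw [min_eq_left hv1, mul_one]
    exact ha.trans (by gcongr; exact le_max_left a b)

def kernelConst (σ τ c C₀ : ℝ) : ℝ :=
  max (C₀ * ∫ u in Ioi 0, psiWeight σ τ u) (C₀ * (Real.Gamma (σ + 1) * c ^ (-(σ + 1))))

lemma kernelConst_pos {σ τ c C₀ : ℝ} (hσ : -1 < σ) (hc : 0 < c) (hC₀ : 0 < C₀) :
    0 < kernelConst σ τ c C₀ :=
  lt_max_of_lt_right <| mul_pos hC₀ <|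
    mul_pos (Real.Gamma_pos_of_pos (by linarith)) (Real.rpow_pos_of_pos hc _)

lemma setIntegral_le_kernelConst {F : ℝ → ℝ} {σ τ c C₀ B t r : ℝ} (hσ : -1 < σ) (hτ : 1 < τ)
    (hc : 0 < c) (hC₀ : 0 ≤ C₀) (hB : 0 ≤ B) (ht : 0 < t) (hr : 0 < r) (hF₀ : ∀ ρ, 0 ≤ F ρ)
    (hF : ∀ ρ > 0, F ρ ≤ Real.exp (-(c * r * ρ)) * (C₀ * psiWeight σ τ (t * ρ)) * B) :
    ∫ ρ in Ioi 0, F ρ ≤ kernelConst σ τ c C₀ * B / t * min 1 ((t / r) ^ (σ + 1)) := by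
  have bound_by_one : ∫ ρ in Ioi 0, F ρ ≤ C₀ * (∫ u in Ioi 0, psiWeight σ τ u) * (B / t) := by
    refine (setIntegral_le_of_le_psiWeight_comp_mul (K := C₀ * B) hσ hτ ht hF₀
      fun ρ hρ ↦ (hF ρ hρ).trans ?_).trans_eq (by ring)
    have hexp : Real.exp (-(c * r * ρ)) ≤ 1 := Real.exp_le_one_iff.2 (neg_nonpos.2 (by positivity))
    have := psiWeight_nonneg (σ := σ) (τ := τ) (mul_pos ht hρ).le
    calc Real.exp (-(c * r * ρ)) * (C₀ * psiWeight σ τ (t * ρ)) * B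
        ≤ 1 * (C₀ * psiWeight σ τ (t * ρ)) * B := by gcongr
      _ = C₀ * B * psiWeight σ τ (t * ρ) := by ring
  have bound_by_decay : ∫ ρ in Ioi 0, F ρ ≤
      C₀ * (Real.Gamma (σ + 1) * c ^ (-(σ + 1))) * (B / t) * (t / r) ^ (σ + 1) := by
    refine (setIntegral_le_of_le_rpow_mul_exp_neg_mul (K := C₀ * B * t ^ σ) hσ (mul_pos hc hr)
      hF₀ fun ρ hρ ↦ (hF ρ hρ).trans ?_).trans_eq ?_
    · calc Real.exp (-(c * r * ρ)) * (C₀ * psiWeight σ τ (t * ρ)) * B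
          ≤ Real.exp (-(c * r * ρ)) * (C₀ * (t * ρ) ^ σ) * B := by
            gcongr
            exact psiWeight_le_rpow (mul_pos ht hρ).le
        _ = C₀ * B * t ^ σ * (ρ ^ σ * Real.exp (-(c * r * ρ))) := by
            rw [Real.mul_rpow ht.le hρ.le]
            ring
    · rw [Real.mul_rpow hc.le hr.le, Real.div_rpow ht.le hr.le, Real.rpow_add_one ht.ne',
        Real.rpow_neg hr.le]
      have : r ^ (σ + 1) ≠ 0 := (Real.rpow_pos_of_pos hr _).ne'
      field_simp
  rw [kernelConst, mul_div_assoc]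
  exact le_max_mul_mul_min_of_le_of_le (by positivity) (by positivity)
    bound_by_one bound_by_decay

lemma norm_inv_two_pi_I_mul_integral_le {α : Type*} [MeasurableSpace α] {μ : Measure α}
    (G : α → ℂ) :
    ‖(1 / (2 * (Real.pi : ℂ) * Complex.I)) * ∫ x, G x ∂μ‖ ≤ ∫ x, ‖G x‖ ∂μ := by
  have hpi : 1 / (2 * Real.pi) ≤ 1 := by
    rw [div_le_one (by positivity)]
    linarith [Real.pi_gt_three]
  rw [norm_mul]
  calc ‖1 / (2 * (Real.pi : ℂ) * Complex.I)‖ * ‖∫ x, G x ∂μ‖ ≤ 1 * ∫ x, ‖G x‖ ∂μ := by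
        gcongr
        · simpa [abs_of_pos Real.pi_pos] using hpi
        · exact norm_integral_le_integral_norm G
    _ = ∫ x, ‖G x‖ ∂μ := one_mul _

lemma norm_exp_ray_mul_ray (θ ν ρ r : ℝ) :
    ‖Complex.exp (((ρ : ℂ) * Complex.exp ((ν : ℂ) * Complex.I)) *
        ((r : ℂ) * Complex.exp (((Real.pi / 2 - θ : ℝ) : ℂ) * Complex.I)))‖ =
      Real.exp (-(Real.sin (ν - θ) * r * ρ)) := by
  have hprod : ((ρ : ℂ) * Complex.exp ((ν : ℂ) * Complex.I)) *
      ((r : ℂ) * Complex.exp (((Real.pi / 2 - θ : ℝ) : ℂ) * Complex.I)) =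
      ((ρ * r : ℝ) : ℂ) * Complex.exp (((ν + (Real.pi / 2 - θ) : ℝ) : ℂ) * Complex.I) := by
    push_cast
    rw [add_mul, Complex.exp_add]
    ring
  rw [hprod, Complex.norm_exp, Complex.re_ofReal_mul, Complex.exp_ofReal_mul_I_re,
    show ν + (Real.pi / 2 - θ) = Real.pi / 2 - (θ - ν) by ring, Real.cos_pi_div_two_sub,
    ← neg_sub ν θ, Real.sin_neg]
  congr 1
  ring

/-- Estimate on the contour-integral kernel `η` arising in the holomorphic functional
calculus: bound of the integrand along the ray `γ₊ = ℝ⁺ e^{iν}`, evaluated at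
`z = r e^{i(π/2-θ)}`. -/
theorem statement1 (θ ν σ τ C₀ : ℝ) (hθ : 0 < θ) (hθν : θ < ν) (hν : ν < Real.pi / 2)
    (hσ : 0 < σ) (hτ : 1 < τ) (hC₀ : 0 < C₀) :
    ∃ C > 0, ∀ B : ℝ, 0 < B → ∀ ψ f : ℂ → ℂ,
      (∀ s : ℝ, 0 < s →
        ‖(ψ ((s : ℂ) * Complex.exp ((ν : ℂ) * Complex.I)))‖ ≤
          C₀ * s ^ σ / (1 + s ^ (σ + τ))) →
      (∀ s : ℝ, 0 < s →
        ‖(f ((s : ℂ) * Complex.exp ((ν : ℂ) * Complex.I)))‖ ≤ B) →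
      ∀ t : ℝ, 0 < t → ∀ r : ℝ, 0 < r →
        (∫ ρ in Set.Ioi (0 : ℝ),
            ‖(Complex.exp (((ρ : ℂ) * Complex.exp ((ν : ℂ) * Complex.I)) *
                ((r : ℂ) * Complex.exp (((Real.pi / 2 - θ : ℝ) : ℂ) * Complex.I))))‖ *
              ‖(ψ ((t : ℂ) * (ρ : ℂ) * Complex.exp ((ν : ℂ) * Complex.I)))‖ *
              ‖(f ((ρ : ℂ) * Complex.exp ((ν : ℂ) * Complex.I)))‖) ≤
          C * B / t * min 1 ((t / r) ^ (σ + 1)) ∧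
        ‖((1 / (2 * (Real.pi : ℂ) * Complex.I)) *
            ∫ ρ in Set.Ioi (0 : ℝ),
              Complex.exp (((ρ : ℂ) * Complex.exp ((ν : ℂ) * Complex.I)) *
                  ((r : ℂ) * Complex.exp (((Real.pi / 2 - θ : ℝ) : ℂ) * Complex.I))) *
                ψ ((t : ℂ) * (ρ : ℂ) * Complex.exp ((ν : ℂ) * Complex.I)) *
                f ((ρ : ℂ) * Complex.exp ((ν : ℂ) * Complex.I)) *
                Complex.exp ((ν : ℂ) * Complex.I))‖ ≤
          C * B / t * min 1 ((t / r) ^ (σ + 1)) := by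
  have hc : 0 < Real.sin (ν - θ) := Real.sin_pos_of_pos_of_lt_pi (by linarith) (by linarith)
  refine ⟨kernelConst σ τ (Real.sin (ν - θ)) C₀, kernelConst_pos (by linarith) hc hC₀, ?_⟩
  intro B hB ψ f hψ hf t ht r hr
  set ω := Complex.exp ((ν : ℂ) * Complex.I) with hω
  set ζ := (r : ℂ) * Complex.exp (((Real.pi / 2 - θ : ℝ) : ℂ) * Complex.I)
  have hpointwise : ∀ ρ : ℝ, ρ > 0 → ‖Complex.exp (ρ * ω * ζ)‖ * ‖ψ (t * ρ * ω)‖ * ‖f (ρ * ω)‖ ≤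
      Real.exp (-(Real.sin (ν - θ) * r * ρ)) * (C₀ * psiWeight σ τ (t * ρ)) * B := by
    intro ρ hρ
    rw [norm_exp_ray_mul_ray]
    have := psiWeight_nonneg (σ := σ) (τ := τ) (mul_pos ht hρ).le
    gcongr
    · simpa [psiWeight, mul_div_assoc] using hψ (t * ρ) (mul_pos ht hρ)
    · exact hf ρ hρ
  have hbound := setIntegral_le_kernelConst (by linarith) hτ hc hC₀.le hB.le ht hr
    (fun ρ ↦ by positivity) hpointwise
  refine ⟨hbound, (norm_inv_two_pi_I_mul_integral_le _).trans (le_of_eq_of_le ?_ hbound)⟩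
  congr 1 with ρ
  simp only [norm_mul, hω, Complex.norm_exp_ofReal_mul_I, mul_one]
end
end

section
/- For every σ > 0 and c > 0 there exists a constant C > 0, depending only on σ and c, such that for all t > 0 and all D > 0: (1/t) ∫₀^∞ exp(−D/(c r)) · min{1, (t/r)^{σ+1}} dr ≤ C · min{1, (t/D)^σ}. -/
/-!
The integrand is bounded both by `min 1 ((t / r) ^ (σ + 1))`, whose integral is
`t (σ + 1) / σ`, and by `exp (-D / (c r)) (t / r) ^ (σ + 1)`, whose integral the substitution
`r = 1 / y` turns into a Gamma integral equal to `Γ(σ) c ^ σ t (t / D) ^ σ`. Hence the claim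
holds with `C = max ((σ + 1) / σ) (Γ(σ) c ^ σ)`.
-/

open MeasureTheory Real Set

section MinOneDivRpow

variable {t p : ℝ}

lemma min_one_div_rpow_of_le (hp : 0 ≤ p) {r : ℝ} (hr : 0 < r) (hrt : r ≤ t) :
    min 1 ((t / r) ^ p) = 1 :=
  min_eq_left (one_le_rpow ((one_le_div hr).mpr hrt) hp)

lemma min_one_div_rpow_of_lt (ht : 0 < t) (hp : 0 ≤ p) {r : ℝ} (htr : t < r) :
    min 1 ((t / r) ^ p) = t ^ p * r ^ (-p) := by
  have hr : 0 < r := ht.trans htr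
  rw [min_eq_right (rpow_le_one (by positivity) ((div_le_one hr).mpr htr.le) hp),
    div_rpow ht.le hr.le, rpow_neg hr.le, div_eq_mul_inv]

lemma integrableOn_min_one_div_rpow (ht : 0 < t) (hp : 1 < p) :
    IntegrableOn (fun r : ℝ ↦ min 1 ((t / r) ^ p)) (Ioi 0) := by
  rw [← Ioc_union_Ioi_eq_Ioi ht.le, integrableOn_union]
  constructor
  · exact (integrableOn_const measure_Ioc_lt_top.ne).congr_fun
      (fun r hr ↦ (min_one_div_rpow_of_le (by linarith) hr.1 hr.2).symm) measurableSet_Ioc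
  · have hpow : IntegrableOn (fun r : ℝ ↦ t ^ p * r ^ (-p)) (Ioi t) :=
      (integrableOn_Ioi_rpow_of_lt (by linarith) ht).const_mul _
    exact hpow.congr_fun (fun r hr ↦ (min_one_div_rpow_of_lt ht (by linarith) hr).symm)
      measurableSet_Ioi

lemma integral_min_one_div_rpow (ht : 0 < t) (hp : 1 < p) :
    ∫ r in Ioi 0, min 1 ((t / r) ^ p) = t * p / (p - 1) := by
  have hint := integrableOn_min_one_div_rpow ht hp
  rw [← Ioc_union_Ioi_eq_Ioi ht.le, setIntegral_union Ioc_disjoint_Ioi_same measurableSet_Ioi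
      (hint.mono_set Ioc_subset_Ioi_self) (hint.mono_set (Ioi_subset_Ioi ht.le)),
    setIntegral_congr_fun measurableSet_Ioc
      (fun r hr ↦ min_one_div_rpow_of_le (by linarith) hr.1 hr.2),
    setIntegral_congr_fun measurableSet_Ioi (fun r hr ↦ min_one_div_rpow_of_lt ht (by linarith) hr),
    integral_const_mul, integral_Ioi_rpow_of_lt (by linarith) ht]
  simp only [integral_const, measureReal_restrict_apply_univ, Real.volume_real_Ioc, sub_zero,
    max_eq_left ht.le, smul_eq_mul, mul_one]
  have htt : t ^ p * t ^ (-p + 1) = t := by rw [← rpow_add ht]; simp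
  have hp₁ : -p + 1 ≠ 0 := by linarith
  have hp₂ : p - 1 ≠ 0 := by linarith
  rw [mul_div_assoc', mul_neg, htt]
  field_simp
  ring

end MinOneDivRpow

section ExpNegDivMulRpow

variable {a s : ℝ}

/- The substitution `r = x⁻¹` carries the Gamma integrand `y ^ (s - 1) * exp (-(a * y))`
to `exp (-(a / r)) * r ^ (-(s + 1))`. -/
lemma rpow_neg_two_mul_gamma_integrand_rpow_neg_one {x : ℝ} (hx : 0 < x) :
    x ^ ((-1 : ℝ) - 1) * ((x ^ (-1 : ℝ)) ^ (s - 1) * exp (-(a * x ^ (-1 : ℝ)))) =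
      exp (-(a / x)) * x ^ (-(s + 1)) := by
  rw [← rpow_mul hx.le, ← mul_assoc, ← rpow_add hx, rpow_neg_one, div_eq_mul_inv, mul_comm]
  ring_nf

lemma integrableOn_exp_neg_div_mul_rpow (ha : 0 < a) (hs : 0 < s) :
    IntegrableOn (fun r : ℝ ↦ exp (-(a / r)) * r ^ (-(s + 1))) (Ioi 0) := by
  have hgamma : IntegrableOn (fun y : ℝ ↦ y ^ (s - 1) * exp (-(a * y))) (Ioi 0) := by
    simpa [rpow_one] using integrableOn_rpow_mul_exp_neg_mul_rpow (p := 1) (by linarith) one_pos ha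
  exact ((integrableOn_Ioi_comp_rpow_iff' _ (p := -1) (by norm_num)).mpr hgamma).congr_fun
    (fun x hx ↦ rpow_neg_two_mul_gamma_integrand_rpow_neg_one hx) measurableSet_Ioi

lemma integral_exp_neg_div_mul_rpow (ha : 0 < a) (hs : 0 < s) :
    ∫ r in Ioi 0, exp (-(a / r)) * r ^ (-(s + 1)) = Gamma s / a ^ s := by
  have hsubst := integral_comp_rpow_Ioi (fun y : ℝ ↦ y ^ (s - 1) * exp (-(a * y)))
    (p := -1) (by norm_num)
  rw [integral_rpow_mul_exp_neg_mul_Ioi hs ha] at hsubst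
  rw [← setIntegral_congr_fun measurableSet_Ioi
    (fun x hx ↦ rpow_neg_two_mul_gamma_integrand_rpow_neg_one hx)]
  simpa [one_div, div_eq_inv_mul, inv_rpow ha.le] using hsubst

end ExpNegDivMulRpow

section OffDiagonalIntegral

variable {σ c t D : ℝ}

lemma integral_exp_mul_min_one_div_rpow_le (hσ : 0 < σ) (hc : 0 ≤ c) (ht : 0 < t)
    (hD : 0 ≤ D) :
    ∫ r in Ioi 0, exp (-D / (c * r)) * min 1 ((t / r) ^ (σ + 1)) ≤ t * ((σ + 1) / σ) := by
  calc _ ≤ ∫ r in Ioi 0, min 1 ((t / r) ^ (σ + 1)) := by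
        refine integral_mono_of_nonneg ?_ (integrableOn_min_one_div_rpow ht (by linarith)) ?_
        all_goals filter_upwards [ae_restrict_mem measurableSet_Ioi] with r (hr : 0 < r)
        · positivity
        refine mul_le_of_le_one_left (by positivity) (exp_le_one_iff.mpr ?_)
        exact div_nonpos_of_nonpos_of_nonneg (by linarith) (by positivity)
    _ = t * ((σ + 1) / σ) := by
        rw [integral_min_one_div_rpow ht (by linarith), add_sub_cancel_right, mul_div_assoc]

lemma integral_exp_mul_min_one_div_rpow_le_gamma (hσ : 0 < σ) (hc : 0 < c) (ht : 0 < t)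
    (hD : 0 < D) :
    ∫ r in Ioi 0, exp (-D / (c * r)) * min 1 ((t / r) ^ (σ + 1)) ≤
      t * (Gamma σ * c ^ σ * (t / D) ^ σ) := by
  calc _ ≤ ∫ r in Ioi 0, t ^ (σ + 1) * (exp (-(D / c / r)) * r ^ (-(σ + 1))) := by
        refine integral_mono_of_nonneg ?_
          ((integrableOn_exp_neg_div_mul_rpow (div_pos hD hc) hσ).const_mul _) ?_
        all_goals filter_upwards [ae_restrict_mem measurableSet_Ioi] with r (hr : 0 < r)
        · positivity
        calc _ ≤ exp (-D / (c * r)) * (t / r) ^ (σ + 1) := by gcongr; exact min_le_right _ _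
          _ = _ := by rw [div_rpow ht.le hr.le, rpow_neg hr.le, div_div, neg_div]; ring
    _ = t * (Gamma σ * c ^ σ * (t / D) ^ σ) := by
        rw [integral_const_mul, integral_exp_neg_div_mul_rpow (div_pos hD hc) hσ, rpow_add ht,
          rpow_one, div_rpow hD.le hc.le, div_rpow ht.le hD.le]
        field_simp

end OffDiagonalIntegral

/-- The scalar inequality at the analytic core of off-diagonal estimates of order `σ`:
`D` plays the role of `dist(E,F)²` and `t` the role of the scale parameter. -/
theorem statement2 (σ c : ℝ) (hσ : 0 < σ) (hc : 0 < c) :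
    ∃ C > 0, ∀ t : ℝ, 0 < t → ∀ D : ℝ, 0 < D →
      (1 / t) * ∫ r in Set.Ioi (0 : ℝ),
          Real.exp (-D / (c * r)) * min 1 ((t / r) ^ (σ + 1)) ≤
        C * min 1 ((t / D) ^ σ) := by
  have hC : 0 < max ((σ + 1) / σ) (Gamma σ * c ^ σ) := lt_max_of_lt_left (by positivity)
  refine ⟨_, hC, fun t ht D hD ↦ ?_⟩
  rw [one_div, inv_mul_le_iff₀ ht, mul_min_of_nonneg _ _ hC.le, mul_one,
    mul_min_of_nonneg _ _ ht.le]
  refine le_min ?_ ?_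
  · exact (integral_exp_mul_min_one_div_rpow_le hσ hc.le ht hD.le).trans
      (mul_le_mul_of_nonneg_left (le_max_left _ _) ht.le)
  · exact (integral_exp_mul_min_one_div_rpow_le_gamma hσ hc ht hD).trans
      (mul_le_mul_of_nonneg_left
        (mul_le_mul_of_nonneg_right (le_max_right _ _) (by positivity)) ht.le)
end
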